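/- arXiv:1410.4638 — 2 statements merged into one kernel-verified Lean document; each statement's English description precedes it below -/
import Mathlib

section
/- Let $\chi \colon E^\times \to \mathbb{C}^\times$ be a group homomorphism trivial on $\mathbb{Q}_p^\times$ with conductor exponent $n > 0$. For an integer $k$ with $0 \le k \le n$, let $S_k$ denote the sum $\sum_b \chi(1+b\theta)^{-1}$ taken over a complete set of representatives $b$ of $\mathbb{Z}_p/p^n\mathbb{Z}_p$ such that $1+b \in \mathbb{Z}_p^\times$ and $\mathrm{ord}_p(b) = k$ (where, for $k = n$, the condition $\mathrm{ord}_p(b)=n$ means $b \equiv 0 \bmod p^n$). Then $S_k = 0$ if $k \le n-2$, $S_{n-1} = -1$, and $S_n = 1$. -/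
open scoped Classical

namespace ArakawaSplit

variable (p : ℕ) [Fact p.Prime]

/-- The split quadratic étale algebra `E = ℚ_p × ℚ_p`, with `ℚ_p` embedded diagonally. -/
abbrev E := ℚ_[p] × ℚ_[p]

/-- `θ = (1,0) ∈ E`. -/
noncomputable def θ : E p := (1, 0)

/-- The inclusion `ℤ_p → E` (diagonal). -/
noncomputable def ι : ℤ_[p] →+* E p := algebraMap ℤ_[p] (E p)

/-- Membership in `𝒪_E = ℤ_p × ℤ_p ⊆ E`. -/
def MemOE (z : E p) : Prop := (∃ x : ℤ_[p], z.1 = x) ∧ (∃ y : ℤ_[p], z.2 = y)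

/-- Membership in `𝒪_{E,i} = ℤ_p + p^i 𝒪_E ⊆ E`. -/
def MemOEi (i : ℕ) (z : E p) : Prop :=
  ∃ a w₁ w₂ : ℤ_[p],
    z = ((a : ℚ_[p]) + (p : ℚ_[p]) ^ i * w₁, (a : ℚ_[p]) + (p : ℚ_[p]) ^ i * w₂)

/-- Membership of a unit `u ∈ Eˣ` in `𝒪_{E,i}^× = 𝒪_{E,i} ∩ 𝒪_E^×`. -/
def MemOEiUnits (i : ℕ) (u : (E p)ˣ) : Prop :=
  MemOEi p i ↑u ∧ MemOE p ↑u ∧ MemOE p ↑u⁻¹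

/-- `χ : E^× → ℂ^×` is trivial on the diagonally embedded `ℚ_p^×`. -/
def TrivialOnQp (χ : (E p)ˣ →* ℂˣ) : Prop :=
  ∀ t : ℚ_[p]ˣ, χ (Units.map (algebraMap ℚ_[p] (E p)).toMonoidHom t) = 1

/-- `χ` has conductor exponent `n`: it is trivial on `𝒪_{E,n}^×` and, when `n > 0`,
nontrivial on `𝒪_{E,n-1}^×`. -/
def CondExp (χ : (E p)ˣ →* ℂˣ) (n : ℕ) : Prop :=
  (∀ u : (E p)ˣ, MemOEiUnits p n u → χ u = 1) ∧
  (0 < n → ∃ u : (E p)ˣ, MemOEiUnits p (n - 1) u ∧ χ u ≠ 1)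

/-- The value of `χ` at an element of `E`, with junk value `0` at non-units. -/
noncomputable def chiV (χ : (E p)ˣ →* ℂˣ) (z : E p) : ℂ :=
  if h : IsUnit z then (χ h.unit : ℂ) else 0

end ArakawaSplit

open ArakawaSplit

/-! Put `ψ(x) = χ(x, 1)` for `x ∈ ℤ_pˣ`, so that `χ(1 + bθ) = ψ(1 + b)`. Since `χ` is trivial on
`ℚ_pˣ`, writing a unit of `𝒪_{E,n-1}` as `(α, β) = (α β⁻¹, 1)(β, β)` turns the nontriviality of `χ`
there into a `v ≡ 1 mod p^(n-1)` with `ψ(v) ≠ 1`. Multiplication of `1 + b` by `v` permutes the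
classes mod `p^n` with `ord_p(b) = k` when `k ≤ n - 2`, and those with `ord_p(b) ≥ n - 1` (the set
of `S_{n-1}` together with `b = 0`); it scales the sum by `ψ(v)⁻¹ ≠ 1`, so the sum vanishes. For
`k = n` there is one class, `b ≡ 0`, where `ψ(1 + b) = 1`. -/

theorem Finset.sum_eq_zero_of_map_eq_mul {K ι : Type*} [CommRing K] [IsDomain K]
    {s : Finset ι} {f : ι → K} {σ : ι → ι} {a : K} (hmaps : Set.MapsTo σ s s)
    (hinj : Set.InjOn σ s) (ha : a ≠ 1) (hf : ∀ i ∈ s, f (σ i) = a * f i) :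
    ∑ i ∈ s, f i = 0 := by
  have hsurj := ((s.finite_toSet.injOn_iff_bijOn_of_mapsTo hmaps).mp hinj).surjOn
  have hfix : a * ∑ i ∈ s, f i = ∑ i ∈ s, f i := by
    rw [Finset.mul_sum]
    exact Finset.sum_nbij σ hmaps hinj hsurj fun i hi => (hf i hi).symm
  have hzero : (a - 1) * ∑ i ∈ s, f i = 0 := by linear_combination hfix
  exact (mul_eq_zero.mp hzero).resolve_left (sub_ne_zero.mpr ha)

theorem dvd_one_add_mul_sub_one_sub {R : Type*} [CommRing R] {q v : R} (x : R)
    (hv : q ∣ v - 1) : q ∣ (1 + x) * v - 1 - x := by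
  convert hv.mul_right (1 + x) using 1
  ring

theorem existsUnique_mem_insert_zero {R : Type*} [CommRing R] {q : R} {k : ℕ} {T : Finset R}
    (hT : ∀ b ∈ T, ¬ q ^ (k + 1) ∣ b)
    (hTrep : ∀ x, q ^ k ∣ x → ¬ q ^ (k + 1) ∣ x → IsUnit (1 + x) →
      ∃! b, b ∈ T ∧ q ^ (k + 1) ∣ x - b)
    {x : R} (hx : q ^ k ∣ x) (hux : IsUnit (1 + x)) :
    ∃! b, b ∈ insert 0 T ∧ q ^ (k + 1) ∣ x - b := by
  by_cases hxq : q ^ (k + 1) ∣ x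
  · refine ⟨0, ⟨Finset.mem_insert_self 0 T, by simpa using hxq⟩, ?_⟩
    rintro b ⟨hb, hxb⟩
    rcases Finset.mem_insert.mp hb with rfl | hbT
    · rfl
    · exact absurd ((dvd_iff_dvd_of_dvd_sub hxb).mp hxq) (hT b hbT)
  · obtain ⟨b, ⟨hbT, hxb⟩, huniq⟩ := hTrep x hx hxq hux
    refine ⟨b, ⟨Finset.mem_insert_of_mem hbT, hxb⟩, ?_⟩
    rintro b' ⟨hb', hxb'⟩
    rcases Finset.mem_insert.mp hb' with rfl | hb'T
    · exact absurd (by simpa using hxb') hxq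
    · exact huniq b' ⟨hb'T, hxb'⟩

namespace ArakawaSplit

variable {p : ℕ} [Fact p.Prime] (χ : (E p)ˣ →* ℂˣ)

noncomputable def fstUnits : ℤ_[p]ˣ →* (E p)ˣ :=
  Units.map ((MonoidHom.inl ℚ_[p] ℚ_[p]).comp PadicInt.Coe.ringHom.toMonoidHom)

@[simp]
theorem val_fstUnits (x : ℤ_[p]ˣ) : ((fstUnits x : (E p)ˣ) : E p) = ((x : ℚ_[p]), 1) := rfl

noncomputable def fstChar : ℤ_[p]ˣ →* ℂˣ := χ.comp fstUnits

theorem one_add_ι_mul_θ (b : ℤ_[p]) : 1 + ι p b * θ p = (((1 + b : ℤ_[p]) : ℚ_[p]), 1) := by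
  ext <;> simp [ι, θ]

theorem chiV_units (u : (E p)ˣ) : chiV p χ u = χ u := by
  rw [chiV, dif_pos u.isUnit, IsUnit.unit_of_val_units]

theorem chiV_one_add_ι_mul_θ {b : ℤ_[p]} (hb : IsUnit (1 + b)) :
    chiV p χ (1 + ι p b * θ p) = fstChar χ hb.unit := by
  rw [show 1 + ι p b * θ p = fstUnits hb.unit by simp [one_add_ι_mul_θ], chiV_units]
  rfl

theorem fstChar_eq_one_of_dvd {n : ℕ} (htriv : ∀ u, MemOEiUnits p n u → χ u = 1)
    {x : ℤ_[p]ˣ} (hx : (p : ℤ_[p]) ^ n ∣ x - 1) : fstChar χ x = 1 := by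
  obtain ⟨t, ht⟩ := hx
  refine htriv _ ⟨⟨1, t, 0, ?_⟩, ⟨⟨x, rfl⟩, ⟨1, rfl⟩⟩, ⟨⟨(x⁻¹ : ℤ_[p]ˣ), rfl⟩, ⟨1, rfl⟩⟩⟩
  rw [val_fstUnits, eq_add_of_sub_eq' ht]
  ext <;> simp

theorem fstChar_congr {n : ℕ} (htriv : ∀ u, MemOEiUnits p n u → χ u = 1)
    {x y : ℤ_[p]ˣ} (hxy : (p : ℤ_[p]) ^ n ∣ x - y) : fstChar χ x = fstChar χ y := by
  have h : fstChar χ (y⁻¹ * x) = 1 := by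
    refine fstChar_eq_one_of_dvd χ htriv ?_
    have : ((y⁻¹ * x : ℤ_[p]ˣ) : ℤ_[p]) - 1 = (y⁻¹ : ℤ_[p]ˣ) * (x - y) := by
      rw [Units.val_mul, mul_sub, Units.inv_mul]
    rw [this]
    exact hxy.mul_left _
  rwa [map_mul, map_inv, inv_mul_eq_one, eq_comm] at h

theorem chiV_one_add_ι_mul_θ_eq_one {n : ℕ} (htriv : ∀ u, MemOEiUnits p n u → χ u = 1)
    {b : ℤ_[p]} (hb : (p : ℤ_[p]) ^ n ∣ b) (hu : IsUnit (1 + b)) :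
    chiV p χ (1 + ι p b * θ p) = 1 := by
  rw [chiV_one_add_ι_mul_θ χ hu, fstChar_eq_one_of_dvd χ htriv (by simpa using hb), Units.val_one]

theorem exists_units_of_memOE {u : (E p)ˣ} (hu : MemOE p u) (hu' : MemOE p ↑u⁻¹) :
    ∃ α β : ℤ_[p]ˣ, (u : E p) = ((α : ℚ_[p]), (β : ℚ_[p])) := by
  obtain ⟨⟨x, hx⟩, ⟨y, hy⟩⟩ := hu
  obtain ⟨⟨x', hx'⟩, ⟨y', hy'⟩⟩ := hu'
  have hmul := congrArg Prod.fst u.mul_inv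
  have hmul' := congrArg Prod.snd u.mul_inv
  simp only [Prod.fst_mul, Prod.snd_mul, Prod.fst_one, Prod.snd_one, hx, hx', hy, hy']
    at hmul hmul'
  exact ⟨Units.mkOfMulEqOne x x' (PadicInt.ext (by push_cast; exact hmul)),
    Units.mkOfMulEqOne y y' (PadicInt.ext (by push_cast; exact hmul')), Prod.ext hx hy⟩

theorem exists_fstChar_ne_one (hχQ : TrivialOnQp p χ) {i : ℕ} {u : (E p)ˣ}
    (hu : MemOEiUnits p i u) (hχu : χ u ≠ 1) :
    ∃ v : ℤ_[p]ˣ, (p : ℤ_[p]) ^ i ∣ v - 1 ∧ fstChar χ v ≠ 1 := by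
  obtain ⟨⟨a, w₁, w₂, hu⟩, hOE, hOE'⟩ := hu
  obtain ⟨α, β, hαβ⟩ := exists_units_of_memOE hOE hOE'
  obtain ⟨hα, hβ⟩ := Prod.mk.inj (hαβ.symm.trans hu)
  replace hα : (α : ℤ_[p]) = a + p ^ i * w₁ := PadicInt.ext (by push_cast; exact hα)
  replace hβ : (β : ℤ_[p]) = a + p ^ i * w₂ := PadicInt.ext (by push_cast; exact hβ)
  refine ⟨α * β⁻¹, ⟨(w₁ - w₂) * (β⁻¹ : ℤ_[p]ˣ), ?_⟩, fun hv => hχu ?_⟩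
  · rw [Units.val_mul, ← β.mul_inv, hα, hβ]
    ring
  · set t := Units.map PadicInt.Coe.ringHom.toMonoidHom β
    have hdiag : ((Units.map (algebraMap ℚ_[p] (E p)).toMonoidHom t : (E p)ˣ) : E p) =
        ((β : ℚ_[p]), (β : ℚ_[p])) := rfl
    have hsplit : u = fstUnits (α * β⁻¹) * Units.map (algebraMap ℚ_[p] (E p)).toMonoidHom t := by
      refine Units.ext (Prod.ext ?_ ?_)
      · rw [Units.val_mul, val_fstUnits, hdiag, hαβ, Prod.fst_mul, ← PadicInt.coe_mul,
          ← Units.val_mul, inv_mul_cancel_right]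
      · rw [Units.val_mul, val_fstUnits, hdiag, hαβ, Prod.snd_mul, one_mul]
    rw [hsplit, map_mul, hχQ, mul_one]
    exact hv

theorem sum_inv_chiV_eq_zero {n : ℕ} (htriv : ∀ u, MemOEiUnits p n u → χ u = 1)
    {v : ℤ_[p]ˣ} (hv : fstChar χ v ≠ 1) {P : ℤ_[p] → Prop}
    (hP : ∀ x, P x → P ((1 + x) * v - 1)) {S : Finset ℤ_[p]}
    (hSmem : ∀ b ∈ S, P b ∧ IsUnit (1 + b))
    (hSrep : ∀ x, P x → IsUnit (1 + x) → ∃! b, b ∈ S ∧ (p : ℤ_[p]) ^ n ∣ x - b) :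
    ∑ b ∈ S, (chiV p χ (1 + ι p b * θ p))⁻¹ = 0 := by
  have hunit : ∀ b ∈ S, IsUnit (1 + ((1 + b) * v - 1)) := fun b hb => by
    simpa using (hSmem b hb).2.mul v.isUnit
  choose! σ hσS hσ using fun b hb => (hSrep _ (hP b (hSmem b hb).1) (hunit b hb)).exists
  refine Finset.sum_eq_zero_of_map_eq_mul (a := (fstChar χ v : ℂ)⁻¹) hσS ?_ ?_ ?_
  · intro b₁ hb₁ b₂ hb₂ hσb
    have hdvd : (p : ℤ_[p]) ^ n ∣ (b₁ - b₂) * v := by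
      have := dvd_sub (hσ b₁ hb₁) (hσ b₂ hb₂)
      rw [hσb] at this
      convert this using 1; ring
    have hdvd' : (p : ℤ_[p]) ^ n ∣ b₁ - b₂ := Units.dvd_mul_right.mp hdvd
    exact (hSrep b₁ (hSmem b₁ hb₁).1 (hSmem b₁ hb₁).2).unique ⟨hb₁, by simp⟩ ⟨hb₂, hdvd'⟩
  · simpa using hv
  · intro b hb
    have hσu := (hSmem _ (hσS b hb)).2
    have hb' := (hSmem b hb).2
    rw [chiV_one_add_ι_mul_θ χ hσu, chiV_one_add_ι_mul_θ χ hb',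
      fstChar_congr χ htriv (y := hb'.unit * v) ?_]
    · simp [mul_comm]
    · simp only [Units.val_mul, IsUnit.unit_spec]
      convert dvd_neg.mpr (hσ b hb) using 1; ring

end ArakawaSplit

theorem lemma_3_4_2_general (p : ℕ) [Fact p.Prime] (χ : (E p)ˣ →* ℂˣ)
    (hχQ : TrivialOnQp p χ) (n : ℕ) (hχn : CondExp p χ n)
    (k : ℕ) (T : Finset ℤ_[p])
    (hTmem : ∀ b ∈ T,
      ((p : ℤ_[p]) ^ k ∣ b ∧ (k < n → ¬ (p : ℤ_[p]) ^ (k + 1) ∣ b)) ∧ IsUnit (1 + b))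
    (hTrep : ∀ x : ℤ_[p],
      ((p : ℤ_[p]) ^ k ∣ x ∧ (k < n → ¬ (p : ℤ_[p]) ^ (k + 1) ∣ x)) → IsUnit (1 + x) →
      ∃! b, b ∈ T ∧ (p : ℤ_[p]) ^ n ∣ (x - b)) :
    (k + 1 < n → ∑ b ∈ T, (chiV p χ (1 + ι p b * θ p))⁻¹ = 0) ∧
    (k + 1 = n → ∑ b ∈ T, (chiV p χ (1 + ι p b * θ p))⁻¹ = -1) ∧
    (k = n → ∑ b ∈ T, (chiV p χ (1 + ι p b * θ p))⁻¹ = 1) := by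
  obtain ⟨htriv, hnontriv⟩ := hχn
  have hshift : 0 < n → ∃ v : ℤ_[p]ˣ, (p : ℤ_[p]) ^ (n - 1) ∣ v - 1 ∧ fstChar χ v ≠ 1 :=
    fun hn => have ⟨_, hu, hχu⟩ := hnontriv hn; exists_fstChar_ne_one χ hχQ hu hχu
  refine ⟨fun hkn => ?_, fun hkn => ?_, fun hkn => ?_⟩
  · obtain ⟨v, hv, hχv⟩ := hshift (by omega)
    refine sum_inv_chiV_eq_zero χ htriv hχv (fun x ⟨hx, hx'⟩ => ?_) hTmem hTrep
    have h := dvd_one_add_mul_sub_one_sub x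
      ((pow_dvd_pow _ (by omega : k + 1 ≤ n - 1)).trans hv)
    exact ⟨(dvd_iff_dvd_of_dvd_sub ((pow_dvd_pow _ k.le_succ).trans h)).mpr hx,
      fun hk => mt (dvd_iff_dvd_of_dvd_sub h).mp (hx' hk)⟩
  · subst hkn
    obtain ⟨v, hv, hχv⟩ := hshift k.succ_pos
    have h0 : (0 : ℤ_[p]) ∉ T := fun h => (hTmem 0 h).1.2 k.lt_succ_self (dvd_zero _)
    have hsum := sum_inv_chiV_eq_zero χ htriv hχv (P := fun x => (p : ℤ_[p]) ^ k ∣ x)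
      (fun x hx => (dvd_iff_dvd_of_dvd_sub (dvd_one_add_mul_sub_one_sub x hv)).mpr hx)
      (S := insert 0 T) (by simpa using fun b hb => ⟨(hTmem b hb).1.1, (hTmem b hb).2⟩)
      (fun x hx hux => existsUnique_mem_insert_zero (fun b hb => (hTmem b hb).1.2 k.lt_succ_self)
        (fun x hx hx' => hTrep x ⟨hx, fun _ => hx'⟩) hx hux)
    rw [Finset.sum_insert h0, chiV_one_add_ι_mul_θ_eq_one χ htriv (dvd_zero _) (by simp),
      inv_one] at hsum
    exact eq_neg_of_add_eq_zero_right hsum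
  · subst hkn
    obtain ⟨b₀, ⟨hb₀, -⟩, huniq⟩ := hTrep 0 ⟨dvd_zero _, by simp⟩ (by simp)
    have hT : T = {b₀} := Finset.eq_singleton_iff_unique_mem.mpr
      ⟨hb₀, fun b hb => huniq b ⟨hb, by simpa using (hTmem b hb).1.1⟩⟩
    rw [hT, Finset.sum_singleton,
      chiV_one_add_ι_mul_θ_eq_one χ htriv (hTmem b₀ hb₀).1.1 (hTmem b₀ hb₀).2, inv_one]

/-- **Lemma 3.4(2)** (split prime case). Let `χ : E^× → ℂ^×` be trivial on `ℚ_p^×`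
with conductor exponent `n > 0`, and let `0 ≤ k ≤ n`. Let `S_k = ∑_b χ(1+bθ)⁻¹`, the
sum over a complete set of representatives `b` of `ℤ_p/p^n ℤ_p` with `1+b ∈ ℤ_p^×` and
`ord_p(b) = k` (for `k = n` the latter means `b ≡ 0 mod p^n`). Then `S_k = 0` if
`k ≤ n-2`, `S_{n-1} = -1`, and `S_n = 1`. -/
theorem lemma_3_4_2 (p : ℕ) [Fact p.Prime] (χ : (E p)ˣ →* ℂˣ)
    (hχQ : TrivialOnQp p χ) (n : ℕ) (hn : 0 < n) (hχn : CondExp p χ n)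
    (k : ℕ) (hk : k ≤ n) (T : Finset ℤ_[p])
    (hTmem : ∀ b ∈ T,
      ((p : ℤ_[p]) ^ k ∣ b ∧ (k < n → ¬ (p : ℤ_[p]) ^ (k + 1) ∣ b)) ∧ IsUnit (1 + b))
    (hTrep : ∀ x : ℤ_[p],
      ((p : ℤ_[p]) ^ k ∣ x ∧ (k < n → ¬ (p : ℤ_[p]) ^ (k + 1) ∣ x)) → IsUnit (1 + x) →
      ∃! b, b ∈ T ∧ (p : ℤ_[p]) ^ n ∣ (x - b)) :
    (k + 1 < n → ∑ b ∈ T, (chiV p χ (1 + ι p b * θ p))⁻¹ = 0) ∧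
    (k + 1 = n → ∑ b ∈ T, (chiV p χ (1 + ι p b * θ p))⁻¹ = -1) ∧
    (k = n → ∑ b ∈ T, (chiV p χ (1 + ι p b * θ p))⁻¹ = 1) :=
  lemma_3_4_2_general p χ hχQ n hχn k T hTmem hTrep
end

section
/- Let $\chi \colon E^\times \to \mathbb{C}^\times$ be a group homomorphism trivial on $\mathbb{Q}_p^\times$ with conductor exponent $n > 0$. Then $\sum_{b} \chi(1+b\theta)^{-1} = 0$ and $\sum_{a} \chi(ap+\theta)^{-1} = 0$, where $b$ and $a$ each run over a complete set of representatives of $\mathbb{Z}_p/p^n\mathbb{Z}_p$ (the summands depending only on the residue classes of $b$ and $a$ modulo $p^n$). -/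
open scoped Classical

namespace ArakawaQuad

variable (p : ℕ) [Fact p.Prime]
variable (E : Type*) [Field E] [Algebra ℚ_[p] E] [Algebra ℤ_[p] E]
  [IsScalarTower ℤ_[p] ℚ_[p] E]

/-- Membership in `𝒪_{E,i} = ℤ_p + p^i 𝒪_E`, where `𝒪_E` is the ring of integers
(the integral closure of `ℤ_p` in `E`). -/
def MemOEi (i : ℕ) (z : E) : Prop :=
  ∃ a : ℤ_[p], ∃ w ∈ integralClosure ℤ_[p] E, z = algebraMap ℤ_[p] E a + (p : E) ^ i * w

/-- Membership of a unit `u ∈ Eˣ` in `𝒪_{E,i}^× = 𝒪_{E,i} ∩ 𝒪_E^×`. -/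
def MemOEiUnits (i : ℕ) (u : Eˣ) : Prop :=
  MemOEi p E i ↑u ∧ (↑u : E) ∈ integralClosure ℤ_[p] E ∧
    ((↑u⁻¹ : E) ∈ integralClosure ℤ_[p] E)

/-- `χ : E^× → ℂ^×` is trivial on `ℚ_p^×`. -/
def TrivialOnQp (χ : Eˣ →* ℂˣ) : Prop :=
  ∀ t : ℚ_[p]ˣ, χ (Units.map (algebraMap ℚ_[p] E).toMonoidHom t) = 1

/-- `χ` has conductor exponent `n`: it is trivial on `𝒪_{E,n}^×` and, when `n > 0`,
nontrivial on `𝒪_{E,n-1}^×`. -/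
def CondExp (χ : Eˣ →* ℂˣ) (n : ℕ) : Prop :=
  (∀ u : Eˣ, MemOEiUnits p E n u → χ u = 1) ∧
  (0 < n → ∃ u : Eˣ, MemOEiUnits p E (n - 1) u ∧ χ u ≠ 1)

/-- The value of `χ : E^× → ℂ^×` at an element of `E`, with junk value `0` at `0`. -/
noncomputable def chiV {F : Type*} [Field F] (χ : Fˣ →* ℂˣ) (z : F) : ℂ :=
  if h : z ≠ 0 then (χ (Units.mk0 z h) : ℂ) else 0

/-- `E` is an unramified quadratic extension of `ℚ_p`: it has degree `2` and the
maximal ideal of its ring of integers `𝒪_E` is `p 𝒪_E` (an element of `𝒪_E` is a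
unit of `𝒪_E` if and only if it does not lie in `p 𝒪_E`). -/
def Unramified : Prop :=
  Module.finrank ℚ_[p] E = 2 ∧
  ∀ z ∈ integralClosure ℤ_[p] E,
    ((∃ w ∈ integralClosure ℤ_[p] E, z * w = 1) ↔
      ¬ ∃ w ∈ integralClosure ℤ_[p] E, z = (p : E) * w)

/-- `E` is a ramified quadratic extension of `ℚ_p` with maximal ideal `𝔭 = θ 𝒪_E`
satisfying `𝔭² = p 𝒪_E`: it has degree `2`, `θ ∈ 𝒪_E` generates the maximal ideal
(an element of `𝒪_E` is a unit of `𝒪_E` iff it is not in `θ 𝒪_E`), and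
`θ² = p u` for a unit `u` of `𝒪_E`. -/
def Ramified (θ : E) : Prop :=
  Module.finrank ℚ_[p] E = 2 ∧
  θ ∈ integralClosure ℤ_[p] E ∧
  (∀ z ∈ integralClosure ℤ_[p] E,
    ((∃ w ∈ integralClosure ℤ_[p] E, z * w = 1) ↔
      ¬ ∃ w ∈ integralClosure ℤ_[p] E, z = θ * w)) ∧
  (∃ u ∈ integralClosure ℤ_[p] E,
    (∃ v ∈ integralClosure ℤ_[p] E, u * v = 1) ∧ θ ^ 2 = (p : E) * u)

/-- `{1, θ}` is a `ℤ_p`-basis of the ring of integers `𝒪_E`. -/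
def IsIntBasis (θ : E) : Prop :=
  θ ∈ integralClosure ℤ_[p] E ∧
  ∀ z ∈ integralClosure ℤ_[p] E, ∃! ab : ℤ_[p] × ℤ_[p],
    z = algebraMap ℤ_[p] E ab.1 + algebraMap ℤ_[p] E ab.2 * θ

/-- `x` lies in the double coset `ℚ_p^× y 𝒪_{E,i}^×` inside `E^×`. -/
def InCoset (i : ℕ) (y x : E) : Prop :=
  ∃ t : ℚ_[p]ˣ, ∃ u : Eˣ, MemOEiUnits p E i u ∧
    x = algebraMap ℚ_[p] E ↑t * y * ↑u

/-- The unit group `𝒪_E^×`, as a subgroup of `E^×`. -/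
def OEUnits : Subgroup Eˣ where
  carrier := {u | (↑u : E) ∈ integralClosure ℤ_[p] E ∧
    ((↑u⁻¹ : E) ∈ integralClosure ℤ_[p] E)}
  one_mem' := ⟨by simpa using (integralClosure ℤ_[p] E).one_mem,
    by simpa using (integralClosure ℤ_[p] E).one_mem⟩
  mul_mem' := by
    rintro a b ⟨ha1, ha2⟩ ⟨hb1, hb2⟩
    refine ⟨?_, ?_⟩
    · simpa [Units.val_mul] using mul_mem ha1 hb1
    · simpa [Units.val_mul, mul_inv_rev] using mul_mem hb2 ha2
  inv_mem' := by
    rintro a ⟨h1, h2⟩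
    exact ⟨h2, by simpa using h1⟩

end ArakawaQuad

open ArakawaQuad

/-!
Since `χ` is trivial on `1 + p^n 𝒪_E`, the summands only depend on residues modulo `p^n`, and
modulo `p^n 𝒪_E` one has `(1 + bθ)(1 + p^(n-1) c θ) ≡ 1 + (b + p^(n-1) c) θ` and
`(ap + θ)(1 + p^(n-1) c θ) ≡ (a + p^(n-1) c u₁) p + θ`, where `θ² = p (u₁ + u₂ θ)`.
As the conductor is exactly `n`, some `ζ = χ(1 + p^(n-1) c θ)` differs from `1`, and translating
`b` by `p^(n-1) c` (resp. `a` by `p^(n-1) c u₁`) multiplies each sum by `ζ⁻¹`, so both vanish.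
-/

namespace ArakawaQuad

theorem padicInt_not_isUnit_iff_dvd {p : ℕ} [Fact p.Prime] {z : ℤ_[p]} :
    ¬IsUnit z ↔ (p : ℤ_[p]) ∣ z :=
  PadicInt.not_isUnit_iff.trans (PadicInt.norm_lt_one_iff_dvd z)

theorem sum_eq_zero_of_periodic_of_shift {R K : Type*} [CommRing R] [CommRing K]
    [NoZeroDivisors K] {m δ : R} {ζ : K} (hζ : ζ ≠ 1) {T : Finset R}
    (hT : ∀ x, ∃! b, b ∈ T ∧ m ∣ x - b) {g : R → K}
    (hg : ∀ b b', m ∣ b - b' → g b = g b') (hshift : ∀ b, g (b + δ) = ζ * g b) :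
    ∑ b ∈ T, g b = 0 := by
  choose r hrT hr using fun x => (hT x).exists
  have hr_eq : ∀ x b, b ∈ T → m ∣ x - b → r x = b :=
    fun x b hb hxb => (hT x).unique ⟨hrT x, hr x⟩ ⟨hb, hxb⟩
  -- `b ↦ r (b + δ)` permutes the representatives, with inverse `b ↦ r (b - δ)`.
  have hperm : ∑ b ∈ T, g (r (b + δ)) = ∑ b ∈ T, g b := by
    refine Finset.sum_nbij' (fun b => r (b + δ)) (fun b => r (b - δ)) (fun b _ => hrT _)
      (fun b _ => hrT _) (fun b hb => hr_eq _ b hb ?_) (fun b hb => hr_eq _ b hb ?_)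
      fun _ _ => rfl
    · simpa [sub_add_eq_sub_sub_swap] using (hr (b + δ)).neg_right
    · simpa [sub_sub_eq_add_sub] using (hr (b - δ)).neg_right
  have hscale : ∑ b ∈ T, g (r (b + δ)) = ζ * ∑ b ∈ T, g b := by
    rw [Finset.mul_sum]
    exact Finset.sum_congr rfl fun b _ => by rw [← hshift, hg _ _ (hr (b + δ))]
  have h : (ζ - 1) * ∑ b ∈ T, g b = 0 := by rw [sub_mul, ← hscale, hperm, one_mul, sub_self]
  exact (mul_eq_zero.1 h).resolve_left (sub_ne_zero.2 hζ)

section chiV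

variable {F : Type*} [Field F] (χ : Fˣ →* ℂˣ)

theorem chiV_units (u : Fˣ) : chiV χ u = χ u := by
  rw [chiV, dif_pos u.ne_zero, Units.mk0_val]

theorem ne_zero_of_chiV_ne_zero {z : F} (h : chiV χ z ≠ 0) : z ≠ 0 := by
  rintro rfl
  simp [chiV] at h

theorem chiV_mul {x y : F} (hx : x ≠ 0) (hy : y ≠ 0) :
    chiV χ (x * y) = chiV χ x * chiV χ y := by
  rw [← Units.val_mk0 hx, ← Units.val_mk0 hy, ← Units.val_mul, chiV_units, chiV_units,
    chiV_units, map_mul, Units.val_mul]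

end chiV

section Ramified

variable {p : ℕ} [Fact p.Prime] {E : Type*} [Field E] [Algebra ℤ_[p] E] {θ : E}

local notation "𝒪" => integralClosure ℤ_[p] E
local notation "ι" => algebraMap ℤ_[p] E

theorem IsIntBasis.coords_mem (hθ : IsIntBasis p E θ) (a b : ℤ_[p]) :
    ι a + ι b * θ ∈ 𝒪 :=
  add_mem (Subalgebra.algebraMap_mem _ a) (mul_mem (Subalgebra.algebraMap_mem _ b) hθ.1)

theorem IsIntBasis.eq_of_coords_eq (hθ : IsIntBasis p E θ) {a b a' b' : ℤ_[p]}
    (h : ι a + ι b * θ = ι a' + ι b' * θ) : a = a' ∧ b = b' :=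
  Prod.ext_iff.1 <| (hθ.2 _ (hθ.coords_mem a b)).unique (y₁ := (a, b)) (y₂ := (a', b')) rfl h

theorem IsIntBasis.exists_eq_coords (hθ : IsIntBasis p E θ) {z : E} (hz : z ∈ 𝒪) :
    ∃ a b : ℤ_[p], z = ι a + ι b * θ :=
  let ⟨ab, h, _⟩ := hθ.2 z hz
  ⟨ab.1, ab.2, h⟩

theorem IsIntBasis.algebraMap_add_ne_zero (hθ : IsIntBasis p E θ) (a : ℤ_[p]) :
    ι a + θ ≠ 0 :=
  fun h => one_ne_zero (hθ.eq_of_coords_eq (a := a) (b := 1) (a' := 0) (b' := 0) (by simp [h])).2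

theorem IsIntBasis.ne_zero (hθ : IsIntBasis p E θ) : θ ≠ 0 := by
  simpa using hθ.algebraMap_add_ne_zero 0

variable [Algebra ℚ_[p] E]

theorem Ramified.exists_theta_sq_eq (hE : Ramified p E θ) (hθ : IsIntBasis p E θ) :
    ∃ u₁ u₂ : ℤ_[p], θ ^ 2 = p * (ι u₁ + ι u₂ * θ) := by
  obtain ⟨-, -, -, u, hu, -, hθu⟩ := hE
  obtain ⟨u₁, u₂, rfl⟩ := hθ.exists_eq_coords hu
  exact ⟨u₁, u₂, hθu⟩

theorem Ramified.exists_theta_sq_mul_eq_p (hE : Ramified p E θ) :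
    ∃ v ∈ 𝒪, θ ^ 2 * v = p := by
  obtain ⟨-, -, -, u, -, ⟨v, hv, huv⟩, hθu⟩ := hE
  exact ⟨v, hv, by rw [hθu, mul_assoc, huv, mul_one]⟩

theorem Ramified.mem_theta_mul_iff (hE : Ramified p E θ) (hθ : IsIntBasis p E θ)
    (a b : ℤ_[p]) : (∃ w ∈ 𝒪, ι a + ι b * θ = θ * w) ↔ (p : ℤ_[p]) ∣ a := by
  constructor
  · rintro ⟨w, hw, h⟩
    obtain ⟨u₁, u₂, hu⟩ := hE.exists_theta_sq_eq hθ
    obtain ⟨c, d, rfl⟩ := hθ.exists_eq_coords hw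
    have hcoords : ι a + ι b * θ = ι (p * (d * u₁)) + ι (c + p * (d * u₂)) * θ := by
      simp only [h, map_add, map_mul, map_natCast]
      linear_combination ι d * hu
    exact ⟨_, (hθ.eq_of_coords_eq hcoords).1⟩
  · rintro ⟨a', rfl⟩
    obtain ⟨v, hv, hθv⟩ := hE.exists_theta_sq_mul_eq_p
    refine ⟨ι a' * θ * v + ι b, add_mem (mul_mem (mul_mem (Subalgebra.algebraMap_mem _ _)
      hθ.1) hv) (Subalgebra.algebraMap_mem _ _), ?_⟩
    simp only [map_mul, map_natCast]
    linear_combination -ι a' * hθv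

theorem Ramified.exists_mul_eq_one_iff (hE : Ramified p E θ) (hθ : IsIntBasis p E θ)
    (a b : ℤ_[p]) : (∃ w ∈ 𝒪, (ι a + ι b * θ) * w = 1) ↔ IsUnit a := by
  rw [hE.2.2.1 _ (hθ.coords_mem a b), hE.mem_theta_mul_iff hθ, ← padicInt_not_isUnit_iff_dvd,
    not_not]

theorem Ramified.exists_one_add_mul_theta_mul_eq_one (hE : Ramified p E θ)
    (hθ : IsIntBasis p E θ) (b : ℤ_[p]) : ∃ w ∈ 𝒪, (1 + ι b * θ) * w = 1 := by
  simpa using (hE.exists_mul_eq_one_iff hθ 1 b).2 isUnit_one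

/-- `a p + θ = θ (a θ v + 1)` where `θ² v = p`, and `a θ v + 1 ≡ 1 (mod θ)` is a unit of `𝒪_E`. -/
theorem Ramified.theta_div_mul_add_theta_mem (hE : Ramified p E θ) (hθ : IsIntBasis p E θ)
    (a : ℤ_[p]) : θ / (ι a * p + θ) ∈ 𝒪 := by
  obtain ⟨v, hv, hθv⟩ := hE.exists_theta_sq_mul_eq_p
  have hy : ι a * θ * v + 1 ∈ 𝒪 :=
    add_mem (mul_mem (mul_mem (Subalgebra.algebraMap_mem _ _) hθ.1) hv) (one_mem _)
  obtain ⟨w, hw, hyw⟩ : ∃ w ∈ 𝒪, (ι a * θ * v + 1) * w = 1 := by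
    refine (hE.2.2.1 _ hy).2 fun ⟨w, hw, h⟩ => ?_
    refine (hE.2.2.1 1 (one_mem _)).1 ⟨1, one_mem _, mul_one 1⟩
      ⟨w - ι a * v, sub_mem hw (mul_mem (Subalgebra.algebraMap_mem _ _) hv), ?_⟩
    linear_combination h
  have hfac : ι a * p + θ = θ * (ι a * θ * v + 1) := by rw [← hθv]; ring
  rwa [hfac, div_mul_cancel_left₀ hθ.ne_zero, inv_eq_of_mul_eq_one_right hyw]

variable {χ : Eˣ →* ℂˣ} {n : ℕ}

theorem Ramified.chiV_one_add_pow_mul (hE : Ramified p E θ) (hθ : IsIntBasis p E θ)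
    (hn : 0 < n) (hχ : ∀ u : Eˣ, MemOEiUnits p E n u → χ u = 1) {q : E} (hq : q ∈ 𝒪) :
    chiV χ (1 + p ^ n * q) = 1 := by
  obtain ⟨x, y, rfl⟩ := hθ.exists_eq_coords hq
  have hcoords :
      1 + (p : E) ^ n * (ι x + ι y * θ) = ι (1 + p ^ n * x) + ι (p ^ n * y) * θ := by
    simp only [map_add, map_mul, map_one, map_pow, map_natCast]
    ring
  have hunit : IsUnit (1 + (p : ℤ_[p]) ^ n * x) := by
    rw [← not_not (a := IsUnit _), padicInt_not_isUnit_iff_dvd,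
      dvd_add_left (dvd_mul_of_dvd_left (dvd_pow_self _ hn.ne') _)]
    exact PadicInt.prime_p.not_dvd_one
  obtain ⟨w, hw, hzw⟩ := (hE.exists_mul_eq_one_iff hθ _ _).2 hunit
  rw [← hcoords] at hzw
  have hne := left_ne_zero_of_mul_eq_one hzw
  have hmem : MemOEiUnits p E n (Units.mk0 _ hne) := by
    refine ⟨⟨1, _, hq, by simp⟩, ?_, ?_⟩
    · rw [Units.val_mk0, hcoords]
      exact hθ.coords_mem _ _
    · rwa [Units.val_inv_eq_inv_val, Units.val_mk0, inv_eq_of_mul_eq_one_right hzw]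
  rw [← Units.val_mk0 hne, chiV_units, hχ _ hmem, Units.val_one]

theorem Ramified.chiV_add_pow_mul (hE : Ramified p E θ) (hθ : IsIntBasis p E θ)
    (hn : 0 < n) (hχ : ∀ u : Eˣ, MemOEiUnits p E n u → χ u = 1) {z w : E} (hz : z ≠ 0)
    (hw : w / z ∈ 𝒪) : chiV χ (z + p ^ n * w) = chiV χ z := by
  have h1 := hE.chiV_one_add_pow_mul hθ hn hχ hw
  have hne := ne_zero_of_chiV_ne_zero χ (h1 ▸ one_ne_zero)
  calc chiV χ (z + p ^ n * w) = chiV χ (z * (1 + p ^ n * (w / z))) := by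
        rw [mul_add, mul_one, mul_left_comm, mul_div_cancel₀ _ hz]
    _ = chiV χ z := by rw [chiV_mul χ hz hne, h1, mul_one]

theorem Ramified.chiV_one_add_mul_theta_congr (hE : Ramified p E θ) (hθ : IsIntBasis p E θ)
    (hn : 0 < n) (hχ : ∀ u : Eˣ, MemOEiUnits p E n u → χ u = 1) (b b' : ℤ_[p])
    (h : (p : ℤ_[p]) ^ n ∣ b - b') : chiV χ (1 + ι b * θ) = chiV χ (1 + ι b' * θ) := by
  obtain ⟨k, hk⟩ := h
  obtain ⟨w, hw, hzw⟩ := hE.exists_one_add_mul_theta_mul_eq_one hθ b'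
  have hb : 1 + ι b * θ = 1 + ι b' * θ + p ^ n * (ι k * θ) := by
    rw [sub_eq_iff_eq_add'.1 hk]
    simp only [map_add, map_mul, map_pow, map_natCast]
    ring
  rw [hb]
  refine hE.chiV_add_pow_mul hθ hn hχ (left_ne_zero_of_mul_eq_one hzw) ?_
  rw [div_eq_mul_inv, inv_eq_of_mul_eq_one_right hzw]
  exact mul_mem (mul_mem (Subalgebra.algebraMap_mem _ _) hθ.1) hw

theorem Ramified.chiV_one_add_mul_theta_add (hE : Ramified p E θ) (hθ : IsIntBasis p E θ)
    (hn : 0 < n) (hχ : ∀ u : Eˣ, MemOEiUnits p E n u → χ u = 1) (b c : ℤ_[p]) :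
    chiV χ (1 + ι (b + p ^ (n - 1) * c) * θ)
      = chiV χ (1 + ι (p ^ (n - 1) * c) * θ) * chiV χ (1 + ι b * θ) := by
  obtain ⟨u₁, u₂, hu⟩ := hE.exists_theta_sq_eq hθ
  obtain ⟨w, hw, hzw⟩ := hE.exists_one_add_mul_theta_mul_eq_one hθ (b + p ^ (n - 1) * c)
  obtain ⟨_, -, hzw₁⟩ := hE.exists_one_add_mul_theta_mul_eq_one hθ b
  obtain ⟨_, -, hzw₂⟩ := hE.exists_one_add_mul_theta_mul_eq_one hθ (p ^ (n - 1) * c)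
  have hpn : (p : E) ^ (n - 1) * p = p ^ n := by rw [← pow_succ, Nat.sub_add_cancel hn]
  have hprod : (1 + ι (p ^ (n - 1) * c) * θ) * (1 + ι b * θ)
      = 1 + ι (b + p ^ (n - 1) * c) * θ + p ^ n * (ι (b * c) * (ι u₁ + ι u₂ * θ)) := by
    simp only [map_add, map_mul, map_pow, map_natCast]
    linear_combination (ι b * ι c * p ^ (n - 1)) * hu
      + (ι b * ι c * (ι u₁ + ι u₂ * θ)) * hpn
  rw [← chiV_mul χ (left_ne_zero_of_mul_eq_one hzw₂) (left_ne_zero_of_mul_eq_one hzw₁), hprod]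
  refine (hE.chiV_add_pow_mul hθ hn hχ (left_ne_zero_of_mul_eq_one hzw) ?_).symm
  rw [div_eq_mul_inv, inv_eq_of_mul_eq_one_right hzw]
  exact mul_mem (mul_mem (Subalgebra.algebraMap_mem _ _) (hθ.coords_mem _ _)) hw

theorem Ramified.chiV_mul_add_theta_congr (hE : Ramified p E θ) (hθ : IsIntBasis p E θ)
    (hn : 0 < n) (hχ : ∀ u : Eˣ, MemOEiUnits p E n u → χ u = 1) (a a' : ℤ_[p])
    (h : (p : ℤ_[p]) ^ n ∣ a - a') : chiV χ (ι a * p + θ) = chiV χ (ι a' * p + θ) := by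
  obtain ⟨k, hk⟩ := h
  obtain ⟨v, hv, hθv⟩ := hE.exists_theta_sq_mul_eq_p
  have ha : ι a * p + θ = ι a' * p + θ + p ^ n * (ι k * θ * v * θ) := by
    rw [sub_eq_iff_eq_add'.1 hk]
    simp only [map_add, map_mul, map_pow, map_natCast]
    linear_combination (-(p : E) ^ n * ι k) * hθv
  have hne : ι a' * p + θ ≠ 0 := by simpa using hθ.algebraMap_add_ne_zero (a' * p)
  rw [ha]
  refine hE.chiV_add_pow_mul hθ hn hχ hne ?_
  rw [mul_div_assoc]
  exact mul_mem (mul_mem (mul_mem (Subalgebra.algebraMap_mem _ _) hθ.1) hv)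
    (hE.theta_div_mul_add_theta_mem hθ a')

theorem Ramified.chiV_mul_add_theta_add (hE : Ramified p E θ) (hθ : IsIntBasis p E θ)
    (hn : 0 < n) (hχ : ∀ u : Eˣ, MemOEiUnits p E n u → χ u = 1) {u₁ u₂ : ℤ_[p]}
    (hu : θ ^ 2 = p * (ι u₁ + ι u₂ * θ)) (a c : ℤ_[p]) :
    chiV χ (ι (a + p ^ (n - 1) * (c * u₁)) * p + θ)
      = chiV χ (1 + ι (p ^ (n - 1) * c) * θ) * chiV χ (ι a * p + θ) := by
  obtain ⟨_, -, hzw⟩ := hE.exists_one_add_mul_theta_mul_eq_one hθ (p ^ (n - 1) * c)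
  have hpn : (p : E) ^ (n - 1) * p = p ^ n := by rw [← pow_succ, Nat.sub_add_cancel hn]
  have hprod : (1 + ι (p ^ (n - 1) * c) * θ) * (ι a * p + θ)
      = ι (a + p ^ (n - 1) * (c * u₁)) * p + θ + p ^ n * (ι (c * (a + u₂)) * θ) := by
    simp only [map_add, map_mul, map_pow, map_natCast]
    linear_combination (ι c * p ^ (n - 1)) * hu
      + (ι c * (ι a + ι u₂) * θ) * hpn
  have hne : ι (a + p ^ (n - 1) * (c * u₁)) * p + θ ≠ 0 := by
    simpa using hθ.algebraMap_add_ne_zero ((a + p ^ (n - 1) * (c * u₁)) * p)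
  have hne' : ι a * p + θ ≠ 0 := by simpa using hθ.algebraMap_add_ne_zero (a * p)
  rw [← chiV_mul χ (left_ne_zero_of_mul_eq_one hzw) hne', hprod]
  refine (hE.chiV_add_pow_mul hθ hn hχ hne ?_).symm
  rw [mul_div_assoc]
  exact mul_mem (Subalgebra.algebraMap_mem _ _) (hE.theta_div_mul_add_theta_mem hθ _)

variable [IsScalarTower ℤ_[p] ℚ_[p] E]

theorem TrivialOnQp.chiV_algebraMap (hχQ : TrivialOnQp p E χ) {t : ℤ_[p]} (ht : IsUnit t) :
    chiV χ (ι t) = 1 := by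
  obtain ⟨t, rfl⟩ := ht
  have ht : ι t = ↑(Units.map (algebraMap ℚ_[p] E).toMonoidHom
      (Units.map (algebraMap ℤ_[p] ℚ_[p]).toMonoidHom t)) := by
    simp [IsScalarTower.algebraMap_apply ℤ_[p] ℚ_[p] E]
  rw [ht, chiV_units, hχQ, Units.val_one]

/-- Dividing a unit `t + p^(n-1) y θ` of `𝒪_{E,n-1}^×` by its constant coordinate `t`, on
which `χ` is trivial, leaves an element `1 + p^(n-1) c θ`. -/
theorem Ramified.exists_chiV_one_add_mul_theta_ne_one (hE : Ramified p E θ)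
    (hθ : IsIntBasis p E θ) (hχQ : TrivialOnQp p E χ)
    (hχ : ∃ u : Eˣ, MemOEiUnits p E (n - 1) u ∧ χ u ≠ 1) :
    ∃ c : ℤ_[p], chiV χ (1 + ι (p ^ (n - 1) * c) * θ) ≠ 1 := by
  obtain ⟨v₀, ⟨⟨s, w, hw, hv₀⟩, -, hv₀inv⟩, hχv₀⟩ := hχ
  obtain ⟨x, y, rfl⟩ := hθ.exists_eq_coords hw
  have hcoords : (v₀ : E) = ι (s + p ^ (n - 1) * x) + ι (p ^ (n - 1) * y) * θ := by
    rw [hv₀]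
    simp only [map_add, map_mul, map_pow, map_natCast]
    ring
  have ht : IsUnit (s + p ^ (n - 1) * x) :=
    (hE.exists_mul_eq_one_iff hθ _ _).1 ⟨_, hv₀inv, hcoords ▸ v₀.mul_inv⟩
  refine ⟨y * ↑ht.unit⁻¹, fun h => hχv₀ (Units.val_eq_one.1 ?_)⟩
  have hfac : (v₀ : E)
      = ι (s + p ^ (n - 1) * x) * (1 + ι (p ^ (n - 1) * (y * ↑ht.unit⁻¹)) * θ) := by
    rw [hcoords, mul_add, mul_one, ← mul_assoc, ← map_mul]
    congr 3
    linear_combination (-(p : ℤ_[p]) ^ (n - 1) * y) * ht.mul_val_inv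
  have hne := ne_zero_of_chiV_ne_zero χ (h ▸ one_ne_zero)
  rw [← chiV_units, hfac, chiV_mul χ (ht.map ι).ne_zero hne, hχQ.chiV_algebraMap ht, h, one_mul]

end Ramified

end ArakawaQuad

/-- **Lemma 3.8(1)** (ramified prime case). Let `E/ℚ_p` be a ramified quadratic
extension with maximal ideal `𝔭 = θ𝒪_E`, `𝔭² = p𝒪_E`, and `{1, θ}` a `ℤ_p`-basis of
`𝒪_E`. Let `χ : E^× → ℂ^×` be trivial on `ℚ_p^×` with conductor exponent `n > 0`.
Then `∑_b χ(1+bθ)⁻¹ = 0` and `∑_a χ(ap+θ)⁻¹ = 0`, where `b` and `a` each run over a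
complete set of representatives of `ℤ_p/p^n ℤ_p` (the summands depending only on the
residue classes of `b` and `a` modulo `p^n`). -/
theorem lemma_3_8_1 (p : ℕ) [Fact p.Prime]
    (E : Type*) [Field E] [Algebra ℚ_[p] E] [Algebra ℤ_[p] E]
    [IsScalarTower ℤ_[p] ℚ_[p] E]
    (θ : E) (hE : Ramified p E θ) (hθ : IsIntBasis p E θ)
    (χ : Eˣ →* ℂˣ) (hχQ : TrivialOnQp p E χ)
    (n : ℕ) (hn : 0 < n) (hχn : CondExp p E χ n)
    (T A : Finset ℤ_[p])
    (hT : ∀ x : ℤ_[p], ∃! b, b ∈ T ∧ (p : ℤ_[p]) ^ n ∣ (x - b))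
    (hA : ∀ x : ℤ_[p], ∃! a, a ∈ A ∧ (p : ℤ_[p]) ^ n ∣ (x - a)) :
    (∀ b b' : ℤ_[p], (p : ℤ_[p]) ^ n ∣ (b - b') →
        chiV χ (1 + algebraMap ℤ_[p] E b * θ)
          = chiV χ (1 + algebraMap ℤ_[p] E b' * θ)) ∧
    (∀ a a' : ℤ_[p], (p : ℤ_[p]) ^ n ∣ (a - a') →
        chiV χ (algebraMap ℤ_[p] E a * (p : E) + θ)
          = chiV χ (algebraMap ℤ_[p] E a' * (p : E) + θ)) ∧
    (∑ b ∈ T, (chiV χ (1 + algebraMap ℤ_[p] E b * θ))⁻¹ = 0) ∧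
    (∑ a ∈ A, (chiV χ (algebraMap ℤ_[p] E a * (p : E) + θ))⁻¹ = 0) := by
  obtain ⟨hχ, hχ_nontriv⟩ := hχn
  obtain ⟨u₁, u₂, hu⟩ := hE.exists_theta_sq_eq hθ
  obtain ⟨c, hc⟩ := hE.exists_chiV_one_add_mul_theta_ne_one hθ hχQ (hχ_nontriv hn)
  have hcongr₁ := hE.chiV_one_add_mul_theta_congr hθ hn hχ
  have hcongr₂ := hE.chiV_mul_add_theta_congr hθ hn hχ
  refine ⟨hcongr₁, hcongr₂, ?_, ?_⟩
  · refine sum_eq_zero_of_periodic_of_shift (δ := p ^ (n - 1) * c) (inv_ne_one.2 hc) hT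
      (fun b b' h => by rw [hcongr₁ b b' h]) fun b => ?_
    rw [hE.chiV_one_add_mul_theta_add hθ hn hχ, mul_inv]
  · refine sum_eq_zero_of_periodic_of_shift (δ := p ^ (n - 1) * (c * u₁)) (inv_ne_one.2 hc) hA
      (fun a a' h => by rw [hcongr₂ a a' h]) fun a => ?_
    rw [hE.chiV_mul_add_theta_add hθ hn hχ hu, mul_inv]
end
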